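/- arXiv:2511.20406 — 5 statements merged into one kernel-verified Lean document; each statement's English description precedes it below -/
import Mathlib

section
/- Let G be the bipartite-like graph G_{n,k} with vertex set V = S ∪ T ∪ C, where |S| = |T| = n, |C| = k, edges exactly between every vertex of C and every vertex of S ∪ T, and k ≤ 2n. Then for every subset A ⊆ V with 0 < |A| ≤ |V|/2, the number of edges |∂A| between A and its complement satisfies |∂A| ≥ (k/8)·|A|. Hence the Cheeger constant of G_{n,k} is at least k/8. -/
/-- The graph `G_{n,k}`: vertex set `(S ⊕ T) ⊕ C` with `|S| = |T| = n`, `|C| = k`;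
edges exactly between every central vertex and every source/target vertex. -/
def twoRadiusGraph (n k : ℕ) : SimpleGraph ((Fin n ⊕ Fin n) ⊕ Fin k) where
  Adj x y := (x.isRight ∧ y.isLeft) ∨ (x.isLeft ∧ y.isRight)
  symm := ⟨by intro x y h; tauto⟩
  loopless := ⟨by intro x h; rcases h with ⟨h1, h2⟩ | ⟨h1, h2⟩ <;> cases x <;> simp_all⟩

instance (n k : ℕ) : DecidableRel (twoRadiusGraph n k).Adj :=
  fun x y => inferInstanceAs (Decidable (_ ∨ _))

/-- Number of edges of `G` with exactly one endpoint in `A`. -/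
def edgeBoundary {V : Type*} [Fintype V] [DecidableEq V]
    (G : SimpleGraph V) [DecidableRel G.Adj] (A : Finset V) : ℕ :=
  ((A ×ˢ Aᶜ).filter fun p => G.Adj p.1 p.2).card

/-!
`G_{n,k}` is the complete bipartite graph `K_{2n,k}`. If `A` has `x` vertices on the side of
size `N = 2n` and `y` on the side of size `K = k`, then `|∂A| = x (K - y) + y (N - x)`. Using
`|A| ≤ (N + K) / 2` and `K ≤ N`, a case split on whether `A` holds at most half of the small side,
and at most `7/8` of the large one, shows `8 |∂A| ≥ K |A|`.
-/

open Finset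

theorem twoRadiusGraph_eq_completeBipartiteGraph (n k : ℕ) :
    twoRadiusGraph n k = completeBipartiteGraph (Fin n ⊕ Fin n) (Fin k) := by
  ext x y
  exact or_comm

namespace Finset

variable {α β : Type*}

lemma card_filter_isLeft (s : Finset (α ⊕ β)) : #(s.filter fun x => x.isLeft) = #s.toLeft := by
  rw [← card_map (Function.Embedding.inl : α ↪ α ⊕ β)]
  congr 1
  ext x
  cases x <;> simp

lemma card_filter_isRight (s : Finset (α ⊕ β)) : #(s.filter fun x => x.isRight) = #s.toRight := by
  rw [← card_map (Function.Embedding.inr : β ↪ α ⊕ β)]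
  congr 1
  ext x
  cases x <;> simp

variable [Fintype α] [Fintype β]

lemma toLeft_compl [DecidableEq α] [DecidableEq β] (s : Finset (α ⊕ β)) : sᶜ.toLeft = s.toLeftᶜ := by
  ext; simp

lemma toRight_compl [DecidableEq α] [DecidableEq β] (s : Finset (α ⊕ β)) : sᶜ.toRight = s.toRightᶜ := by
  ext; simp

end Finset

lemma edgeBoundary_completeBipartiteGraph {α β : Type*} [Fintype α] [Fintype β]
    [DecidableEq α] [DecidableEq β] [DecidableRel (completeBipartiteGraph α β).Adj]
    (A : Finset (α ⊕ β)) :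
    edgeBoundary (completeBipartiteGraph α β) A =
      #A.toLeft * #Aᶜ.toRight + #A.toRight * #Aᶜ.toLeft := by
  have hsplit : (A ×ˢ Aᶜ).filter (fun p => (completeBipartiteGraph α β).Adj p.1 p.2) =
      (A.filter fun x => x.isLeft) ×ˢ (Aᶜ.filter fun x => x.isRight) ∪
        (A.filter fun x => x.isRight) ×ˢ (Aᶜ.filter fun x => x.isLeft) := by
    ext ⟨x, y⟩
    simp only [mem_filter, mem_product, mem_union]
    -- unfolding the adjacency before `mem_filter` fires would break the decidability instance
    simp only [completeBipartiteGraph]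
    tauto
  have hdisj : Disjoint ((A.filter fun x => x.isLeft) ×ˢ (Aᶜ.filter fun x => x.isRight))
      ((A.filter fun x => x.isRight) ×ˢ (Aᶜ.filter fun x => x.isLeft)) := by
    rw [disjoint_left]
    rintro ⟨x, y⟩ h1 h2
    simp only [mem_product, mem_filter] at h1 h2
    cases x <;> simp_all
  rw [edgeBoundary, hsplit, card_union_of_disjoint hdisj, card_product, card_product,
    card_filter_isLeft, card_filter_isRight, card_filter_isLeft, card_filter_isRight]

lemma cut_lower_bound {x y N K : ℝ} (hx : 0 ≤ x) (hy : 0 ≤ y) (hxN : x ≤ N) (hyK : y ≤ K)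
    (hKN : K ≤ N) (hsum : 2 * (x + y) ≤ N + K) :
    K * (x + y) ≤ 8 * (x * (K - y) + y * (N - x)) := by
  rcases le_or_gt (2 * y) K with hyK' | hyK'
  · have hleft : x * K ≤ 2 * (x * (K - y)) := by nlinarith
    rcases le_or_gt (8 * x) (7 * N) with hxN' | hxN'
    · have hright : y * K ≤ 8 * (y * (N - x)) := by nlinarith
      nlinarith
    · nlinarith [mul_nonneg hy (sub_nonneg.2 hxN)]
  · have hright : y * N ≤ 2 * (y * (N - x)) := by nlinarith
    nlinarith [mul_nonneg hx (sub_nonneg.2 hyK)]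

theorem le_edgeBoundary_completeBipartiteGraph {α β : Type*} [Fintype α] [Fintype β]
    [DecidableEq α] [DecidableEq β] [DecidableRel (completeBipartiteGraph α β).Adj]
    (hβα : Fintype.card β ≤ Fintype.card α) (A : Finset (α ⊕ β))
    (hA : 2 * #A ≤ Fintype.card α + Fintype.card β) :
    (Fintype.card β : ℝ) / 8 * #A ≤ edgeBoundary (completeBipartiteGraph α β) A := by
  have hL : #A.toLeft ≤ Fintype.card α := card_le_univ _
  have hR : #A.toRight ≤ Fintype.card β := card_le_univ _
  have hsplit : #A.toLeft + #A.toRight = #A := card_toLeft_add_card_toRight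
  rw [edgeBoundary_completeBipartiteGraph, toLeft_compl, toRight_compl, card_compl, card_compl,
    ← hsplit]
  push_cast [hL, hR]
  have := cut_lower_bound (#A.toLeft).cast_nonneg (#A.toRight).cast_nonneg
    (Nat.cast_le.2 hL) (Nat.cast_le.2 hR) (Nat.cast_le.2 hβα) (by exact_mod_cast hsplit ▸ hA)
  linarith

theorem twoRadius_cheeger_bound_general (n k : ℕ) (hk : k ≤ 2 * n)
    (A : Finset ((Fin n ⊕ Fin n) ⊕ Fin k))
    (hA2 : (A.card : ℝ) ≤ (2 * n + k : ℝ) / 2) :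
    (k : ℝ) / 8 * A.card ≤ (edgeBoundary (twoRadiusGraph n k) A : ℝ) := by
  classical
  have hG : edgeBoundary (twoRadiusGraph n k) A =
      edgeBoundary (completeBipartiteGraph (Fin n ⊕ Fin n) (Fin k)) A := by
    congr 1
    exact twoRadiusGraph_eq_completeBipartiteGraph n k
  have hcard : Fintype.card (Fin n ⊕ Fin n) = 2 * n := by simp [two_mul]
  have := le_edgeBoundary_completeBipartiteGraph (by simpa [hcard] using hk) A
    (by rw [hcard, Fintype.card_fin]; exact_mod_cast (by linarith : (2 * #A : ℝ) ≤ 2 * n + k))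
  rw [Fintype.card_fin] at this
  rwa [hG]

/-- Cheeger bound for `G_{n,k}`: if `k ≤ 2n`, then every `A` with
`0 < |A| ≤ |V|/2` satisfies `|∂A| ≥ (k/8)·|A|`; hence the Cheeger constant of
`G_{n,k}` is at least `k/8`. -/
theorem twoRadius_cheeger_bound (n k : ℕ) (hk : k ≤ 2 * n)
    (A : Finset ((Fin n ⊕ Fin n) ⊕ Fin k)) (hA : 0 < A.card)
    (hA2 : (A.card : ℝ) ≤ (2 * n + k : ℝ) / 2) :
    (k : ℝ) / 8 * A.card ≤ (edgeBoundary (twoRadiusGraph n k) A : ℝ) :=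
  twoRadius_cheeger_bound_general n k hk A hA2
end

section
/- Let a, b, n, k be real numbers with 0 ≤ a ≤ k, 0 ≤ b ≤ 2n, a + b ≤ n + k/2, a + b > 0, and k ≤ 2n. If a ≥ k/2 (so that b ≤ n), then a(2n − b) + b(k − a) ≥ (k/8)(a + b). -/
/-- Case 1 of the Cheeger bound for `G_{n,k}`: if `a ≥ k/2` then
`a(2n − b) + b(k − a) ≥ (k/8)(a + b)`. -/
theorem cheeger_case1 (a b n k : ℝ) (ha0 : 0 ≤ a) (hak : a ≤ k)
    (hb0 : 0 ≤ b) (hb2n : b ≤ 2 * n) (hab : a + b ≤ n + k / 2)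
    (habpos : 0 < a + b) (hk2n : k ≤ 2 * n) (ha : k / 2 ≤ a) :
    k / 8 * (a + b) ≤ a * (2 * n - b) + b * (k - a) := by
  nlinarith [mul_nonneg hb0 (sub_nonneg.2 hak), mul_nonneg ha0 hb0, mul_nonneg ha0 (sub_nonneg.2 hb2n), ha0.trans hak]
end

section
/- Let a, b, n, k be real numbers with 0 ≤ a ≤ k, 0 ≤ b ≤ 2n, a + b ≤ n + k/2, a + b > 0, and k ≤ 2n. If b ≥ n (so that a ≤ k/2), then a(2n − b) + b(k − a) ≥ (k/8)(a + b). -/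
/-- Case 2 of the Cheeger bound for `G_{n,k}`: if `b ≥ n` then
`a(2n − b) + b(k − a) ≥ (k/8)(a + b)`. -/
theorem cheeger_case2 (a b n k : ℝ) (ha0 : 0 ≤ a) (hak : a ≤ k)
    (hb0 : 0 ≤ b) (hb2n : b ≤ 2 * n) (hab : a + b ≤ n + k / 2)
    (habpos : 0 < a + b) (hk2n : k ≤ 2 * n) (hb : n ≤ b) :
    k / 8 * (a + b) ≤ a * (2 * n - b) + b * (k - a) := by
  nlinarith [mul_nonneg ha0 (by linarith : (0:ℝ) ≤ 2*n-b), mul_nonneg hb0 hb0, sq_nonneg (a-b)]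
end

section
/- Let G be a connected graph with a distinguished source vertex s, and define h⁰_v = (if v = s then 1 else 0, if v = s then ℓ else 0) for a fixed real label ℓ ≥ 1, and iteratively h^{k+1}_v[1] = max over u ∈ N(v) ∪ {v} of h^k_u[1] and h^{k+1}_v[2] = max over u ∈ N(v) ∪ {v} of h^k_u[1]·h^k_u[2]. Then for all k and all vertices v: if dist(v, s) ≤ k then h^k_v = (1, ℓ), and if dist(v, s) > k then h^k_v[1] = 0. -/
/-!
Induction on `k`: the vertices at distance `≤ k` from `s` carry `(1, ℓ)` and all others have
first coordinate `0`. Under this invariant every first coordinate is at most `1` and every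
product `h[1] · h[2]` at most `ℓ` (this is where `0 ≤ ℓ` enters), so a maximum over a closed
neighbourhood is `(1, ℓ)` as soon as one vertex of it lies within distance `k`, which is the
case exactly when the centre lies within distance `k + 1`.
-/

namespace Finset

lemma sup'_eq_of_mem_of_forall_le {α β : Type*} [SemilatticeSup α] {s : Finset β}
    {H : s.Nonempty} {f : β → α} {a : α} {b : β} (hb : b ∈ s) (hfb : f b = a)
    (hle : ∀ x ∈ s, f x ≤ a) : s.sup' H f = a :=
  le_antisymm (sup'_le H f hle) (le_sup'_of_le f hb hfb.ge)

end Finset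

namespace SimpleGraph

variable {V : Type*} {G : SimpleGraph V} {s u v : V}

section Neighbourhood

variable [Fintype V] [DecidableEq V] [DecidableRel G.Adj]

lemma dist_le_dist_add_one_of_mem_insert_neighborFinset
    (hu : u ∈ insert v (G.neighborFinset v)) : G.dist v s ≤ G.dist u s + 1 := by
  rcases Finset.mem_insert.mp hu with rfl | hadj
  · exact Nat.le_succ _
  · have hadj : G.Adj v u := (G.mem_neighborFinset v u).mp hadj
    have := hadj.reachable.dist_triangle_left s
    rw [dist_eq_one_iff_adj.mpr hadj] at this
    omega

lemma Reachable.exists_mem_insert_neighborFinset_dist_le (hr : G.Reachable v s) {k : ℕ}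
    (hk : G.dist v s ≤ k + 1) : ∃ u ∈ insert v (G.neighborFinset v), G.dist u s ≤ k := by
  by_cases hv : G.dist v s ≤ k
  · exact ⟨v, Finset.mem_insert_self _ _, hv⟩
  obtain ⟨p, hp⟩ := hr.exists_walk_length_eq_dist
  cases p with
  | nil => simp at hv
  | cons hadj q =>
    refine ⟨_, Finset.mem_insert_of_mem ((G.mem_neighborFinset _ _).mpr hadj), ?_⟩
    have := dist_le q
    rw [Walk.length_cons] at hp
    omega

variable (G) in
@[simps]
def maxUpdate (x : V → ℝ × ℝ) (v : V) : ℝ × ℝ :=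
  ((insert v (G.neighborFinset v)).sup' (Finset.insert_nonempty v _) (fun u => (x u).1),
   (insert v (G.neighborFinset v)).sup' (Finset.insert_nonempty v _)
     (fun u => (x u).1 * (x u).2))

end Neighbourhood

variable (G) in
def LabelsBall (s : V) (ℓ : ℝ) (k : ℕ) (x : V → ℝ × ℝ) : Prop :=
  ∀ v, (G.dist v s ≤ k → x v = (1, ℓ)) ∧ (k < G.dist v s → (x v).1 = 0)

namespace LabelsBall

variable {ℓ : ℝ} {k : ℕ} {x : V → ℝ × ℝ}

lemma fst_le_one (hx : G.LabelsBall s ℓ k x) (v : V) : (x v).1 ≤ 1 := by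
  rcases le_or_gt (G.dist v s) k with hv | hv
  · simp [(hx v).1 hv]
  · simp [(hx v).2 hv]

lemma fst_mul_snd_le (hx : G.LabelsBall s ℓ k x) (hℓ : 0 ≤ ℓ) (v : V) :
    (x v).1 * (x v).2 ≤ ℓ := by
  rcases le_or_gt (G.dist v s) k with hv | hv
  · simp [(hx v).1 hv]
  · simpa [(hx v).2 hv] using hℓ

lemma maxUpdate [Fintype V] [DecidableEq V] [DecidableRel G.Adj] (hconn : G.Connected)
    (hℓ : 0 ≤ ℓ) (hx : G.LabelsBall s ℓ k x) :
    G.LabelsBall s ℓ (k + 1) (G.maxUpdate x) := by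
  intro v
  constructor
  · intro hv
    obtain ⟨u, hu, hus⟩ := (hconn v s).exists_mem_insert_neighborFinset_dist_le hv
    have hxu : x u = (1, ℓ) := (hx u).1 hus
    refine Prod.ext ?_ ?_
    · rw [maxUpdate_fst]
      exact Finset.sup'_eq_of_mem_of_forall_le hu (by simp [hxu])
        fun w _ => hx.fst_le_one w
    · rw [maxUpdate_snd]
      exact Finset.sup'_eq_of_mem_of_forall_le hu (by simp [hxu])
        fun w _ => hx.fst_mul_snd_le hℓ w
  · intro hv
    have hzero : ∀ u ∈ insert v (G.neighborFinset v), (x u).1 = 0 := fun u hu =>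
      (hx u).2 (by have := dist_le_dist_add_one_of_mem_insert_neighborFinset (s := s) hu; omega)
    rw [maxUpdate_fst]
    exact Finset.sup'_eq_of_forall _ _ hzero

end LabelsBall

end SimpleGraph

/-- Max-based message passing propagates the source label: if `dist(v,s) ≤ k`
then `h^k_v = (1, ℓ)`, and if `dist(v,s) > k` then `h^k_v[1] = 0`. -/
theorem max_propagation {V : Type*} [Fintype V] [DecidableEq V]
    (G : SimpleGraph V) [DecidableRel G.Adj] (hconn : G.Connected)
    (s : V) (ℓ : ℝ) (hℓ : 1 ≤ ℓ) (h : ℕ → V → ℝ × ℝ)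
    (h0 : ∀ v, h 0 v = (if v = s then 1 else 0, if v = s then ℓ else 0))
    (hstep1 : ∀ k v, (h (k + 1) v).1 =
      (insert v (G.neighborFinset v)).sup' (Finset.insert_nonempty v _)
        (fun u => (h k u).1))
    (hstep2 : ∀ k v, (h (k + 1) v).2 =
      (insert v (G.neighborFinset v)).sup' (Finset.insert_nonempty v _)
        (fun u => (h k u).1 * (h k u).2)) :
    ∀ k v, (G.dist v s ≤ k → h k v = (1, ℓ)) ∧ (k < G.dist v s → (h k v).1 = 0) := by
  have hstep : ∀ k, h (k + 1) = G.maxUpdate (h k) := fun k =>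
    funext fun v => Prod.ext (hstep1 k v) (hstep2 k v)
  have hbase : G.LabelsBall s ℓ 0 (h 0) := fun v => by
    constructor
    · intro hv
      simp [h0, (hconn.dist_eq_zero_iff).mp (Nat.le_zero.mp hv)]
    · intro hv
      simp [h0, ((hconn v s).dist_eq_zero_iff.not).mp hv.ne']
  suffices ∀ k, G.LabelsBall s ℓ k (h k) from this
  intro k
  induction k with
  | zero => exact hbase
  | succ k ih => exact hstep k ▸ ih.maxUpdate hconn (zero_le_one.trans hℓ)
end

section
/- Under the max-propagation dynamics of the previous statement, for any target vertex t at distance r from s, after exactly r iterations h^r_t = (1, ℓ); hence the Ring Transfer task with radius r is solved exactly by an MPNN whose node feature dimension is 2, independent of r. -/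
/-!
By induction on `k`, `h k` equals `(1, ℓ)` on the closed ball of radius `k` about `s` and `(0, 0)`
off it. The closed ball of radius `k + 1` is the union of the closed neighbourhoods of the points
of the ball of radius `k`, and since `0 ≤ ℓ` the value `(1, ℓ)` dominates `(0, 0)` in both
coordinates (`1 * ℓ` against `0 * 0` in the second), so one max-aggregation step grows the ball by
exactly one.
-/

namespace Finset

theorem sup'_ite_eq_ite_exists {ι α : Type*} [LinearOrder α] {S : Finset ι} (hS : S.Nonempty)
    (p : ι → Prop) [DecidablePred p] {a b : α} (hba : b ≤ a) :
    S.sup' hS (fun i => if p i then a else b) = if ∃ i ∈ S, p i then a else b := by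
  split_ifs with hex
  · obtain ⟨i, hi, hpi⟩ := hex
    refine le_antisymm (sup'_le _ _ fun j _ => ?_) (le_sup'_of_le _ hi (by simp [hpi]))
    split_ifs <;> simp [hba]
  · push Not at hex
    rw [sup'_congr hS rfl fun i hi => if_neg (hex i hi), sup'_const]

end Finset

namespace SimpleGraph

variable {V : Type*} {G : SimpleGraph V}

theorem edist_le_add_one_iff {s v : V} {k : ℕ} :
    G.edist s v ≤ k + 1 ↔ ∃ u, (u = v ∨ G.Adj v u) ∧ G.edist s u ≤ k := by
  constructor
  · intro hv
    by_cases hk : G.edist s v ≤ k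
    · exact ⟨v, Or.inl rfl, hk⟩
    have hvs : G.edist v s = (k + 1 : ℕ) := by
      rw [edist_comm]
      push_cast
      exact le_antisymm hv (Order.add_one_le_of_lt (not_le.mp hk))
    obtain ⟨p, hp⟩ := exists_walk_of_edist_eq_coe hvs
    have hp_not_nil : ¬ p.Nil := by simp [← Walk.length_eq_zero_iff, hp]
    refine ⟨p.snd, Or.inr (p.adj_snd hp_not_nil), ?_⟩
    calc G.edist s p.snd = G.edist p.snd s := edist_comm
      _ ≤ p.tail.length := edist_le _
      _ = k := by simp [Walk.length_tail, hp]
  · rintro ⟨u, huv, hu⟩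
    have hvu : G.edist u v ≤ 1 := edist_le_one_iff_adj_or_eq.mpr (huv.imp_right Adj.symm |>.symm)
    calc G.edist s v ≤ G.edist s u + G.edist u v := SimpleGraph.edist_triangle
      _ ≤ k + 1 := add_le_add hu hvu

end SimpleGraph

open SimpleGraph Finset in
theorem maxPropagation_eq_ite_edist_le {V : Type*} [DecidableEq V] (G : SimpleGraph V)
    [G.LocallyFinite] (s : V) {ℓ : ℝ} (hℓ : 0 ≤ ℓ) (h : ℕ → V → ℝ × ℝ)
    (h0 : ∀ v, h 0 v = (if v = s then 1 else 0, if v = s then ℓ else 0))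
    (hstep1 : ∀ k v, (h (k + 1) v).1 =
      (insert v (G.neighborFinset v)).sup' (Finset.insert_nonempty v _)
        (fun u => (h k u).1))
    (hstep2 : ∀ k v, (h (k + 1) v).2 =
      (insert v (G.neighborFinset v)).sup' (Finset.insert_nonempty v _)
        (fun u => (h k u).1 * (h k u).2)) (k : ℕ) (v : V) :
    h k v = if G.edist s v ≤ k then (1, ℓ) else (0, 0) := by
  induction k generalizing v with
  | zero =>
    simp only [h0, Nat.cast_zero, nonpos_iff_eq_zero, edist_eq_zero_iff, @eq_comm _ s v]
    split_ifs <;> rfl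
  | succ k ih =>
    have hreach : (∃ u ∈ insert v (G.neighborFinset v), G.edist s u ≤ k) ↔
        G.edist s v ≤ (k + 1 : ℕ) := by
      simp [edist_le_add_one_iff]
    ext
    · rw [hstep1]
      simp only [ih, apply_ite Prod.fst]
      exact (sup'_ite_eq_ite_exists _ _ zero_le_one).trans (if_congr hreach rfl rfl)
    · have hprod : ∀ u, (h k u).1 * (h k u).2 = if G.edist s u ≤ k then ℓ else 0 := by
        intro u
        rw [ih]
        split_ifs <;> simp
      rw [hstep2]
      simp only [hprod, apply_ite Prod.snd]
      exact (sup'_ite_eq_ite_exists _ _ hℓ).trans (if_congr hreach rfl rfl)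

/-- Under the max-propagation dynamics, a target vertex `t` at distance `r` from the
source `s` attains the feature `(1, ℓ)` after exactly `r` iterations: the Ring
Transfer task with radius `r` is solved exactly by an MPNN with node feature
dimension `2`, independent of `r`. -/
theorem max_propagation_transfer {V : Type*} [Fintype V] [DecidableEq V]
    (G : SimpleGraph V) [DecidableRel G.Adj] (hconn : G.Connected)
    (s t : V) (r : ℕ) (hdist : G.dist s t = r)
    (ℓ : ℝ) (hℓ : 1 ≤ ℓ) (h : ℕ → V → ℝ × ℝ)
    (h0 : ∀ v, h 0 v = (if v = s then 1 else 0, if v = s then ℓ else 0))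
    (hstep1 : ∀ k v, (h (k + 1) v).1 =
      (insert v (G.neighborFinset v)).sup' (Finset.insert_nonempty v _)
        (fun u => (h k u).1))
    (hstep2 : ∀ k v, (h (k + 1) v).2 =
      (insert v (G.neighborFinset v)).sup' (Finset.insert_nonempty v _)
        (fun u => (h k u).1 * (h k u).2)) :
    h r t = (1, ℓ) := by
  have hedist : G.edist s t = r := by
    rw [← hdist, (hconn.preconnected s t).coe_dist_eq_edist]
  rw [maxPropagation_eq_ite_edist_le G s (zero_le_one.trans hℓ) h h0 hstep1 hstep2,
    if_pos hedist.le]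
end
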